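/- For all integers n ≥ 1 and j ≥ 1, the Jacobi-Stirling numbers with parameter γ = 0 and γ = 1 are related by {n brace j}_0 = {n-1 brace j-1}_1. -/
import Mathlib

noncomputable def JS (γ : ℝ) : ℕ → ℕ → ℝ
  | 0, 0 => 1
  | 0, _ + 1 => 0
  | _ + 1, 0 => 0
  | n + 1, j + 1 => JS γ n j + ((j:ℝ) + 1) * (((j:ℝ) + 1) + 2 * γ - 1) * JS γ n (j + 1)

lemma js_aux : ∀ n j : ℕ, JS 0 (n + 1) (j + 1) = JS 1 n j := by
  intro n
  induction n with
  | zero =>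
    intro j
    cases j <;> simp [JS]
  | succ n ih =>
    intro j
    cases j with
    | zero =>
      simp [JS, ih]
    | succ j =>
      have h1 := ih j
      have h2 := ih (j + 1)
      simp only [JS] at *
      push_cast at *
      rw [h1, h2]
      ring

theorem js_zero_one_shift (n j : ℕ) (hn : 1 ≤ n) (hj : 1 ≤ j) :
    JS 0 n j = JS 1 (n - 1) (j - 1) := by
  rcases n with _ | m
  · omega
  rcases j with _ | k
  · omega
  simpa using js_aux m k
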